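/- arXiv:math/0510436 — 3 statements merged into one kernel-verified Lean document; each statement's English description precedes it below -/
import Mathlib

section
/- Let 0 < γ ≤ 2. For every ρ with −1 < ρ < 1 and every x with ρ + γ ≤ x ≤ 1, one has √(1−ρ²)·√(1−x²)/(1−ρx) ≤ (4−γ²)/(4+γ²), and (4−γ²)/(4+γ²) < 1. -/
set_option autoImplicit false

/-!
Since `(1 - ρx)² = (1 - ρ²)(1 - x²) + (x - ρ)²`, the quantity `√(1 - ρ²)√(1 - x²)/(1 - ρx)` is
at most `c` as soon as `s (1 - ρx) ≤ x - ρ` for some `s ≥ 0` with `c² + s² = 1`. For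
`c = (4 - γ²)/(4 + γ²)` one may take `s = 4γ/(4 + γ²)`; with `d = x - ρ ∈ [γ, 2]` the required bound
follows from `4(1 - ρx) ≤ 4 + d²` and the monotonicity of `d ↦ d/(4 + d²)` on `[0, 2]`.
-/

open Real

theorem sqrt_one_sub_sq_mul_sqrt_div_le {ρ x c s : ℝ} (hρ : ρ ^ 2 ≤ 1) (hρx : 0 < 1 - ρ * x)
    (hc : 0 ≤ c) (hs : 0 ≤ s) (hcs : c ^ 2 + s ^ 2 = 1) (h : s * (1 - ρ * x) ≤ x - ρ) :
    √(1 - ρ ^ 2) * √(1 - x ^ 2) / (1 - ρ * x) ≤ c := by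
  rw [div_le_iff₀ hρx, ← sqrt_mul (by linarith), sqrt_le_iff]
  refine ⟨mul_nonneg hc hρx.le, ?_⟩
  have hsq : (s * (1 - ρ * x)) ^ 2 ≤ (x - ρ) ^ 2 := pow_le_pow_left₀ (by positivity) h 2
  calc (1 - ρ ^ 2) * (1 - x ^ 2) = (1 - ρ * x) ^ 2 - (x - ρ) ^ 2 := by ring
    _ ≤ (1 - ρ * x) ^ 2 - (s * (1 - ρ * x)) ^ 2 := by linarith
    _ = (c * (1 - ρ * x)) ^ 2 := by linear_combination -(1 - ρ * x) ^ 2 * hcs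

theorem four_mul_one_sub_mul_le (ρ x : ℝ) : 4 * (1 - ρ * x) ≤ 4 + (x - ρ) ^ 2 := by
  nlinarith [sq_nonneg (ρ + x)]

theorem mul_four_add_sq_le {γ d : ℝ} (hγ : 0 ≤ γ) (hγd : γ ≤ d) (hd : d ≤ 2) :
    γ * (4 + d ^ 2) ≤ d * (4 + γ ^ 2) := by
  have hγd4 : γ * d ≤ 4 := by nlinarith
  nlinarith [mul_nonneg (sub_nonneg.2 hγd) (sub_nonneg.2 hγd4)]

theorem four_mul_one_sub_mul_le_mul {γ ρ x : ℝ} (hγ : 0 ≤ γ) (hγd : γ ≤ x - ρ)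
    (hd : x - ρ ≤ 2) : 4 * γ * (1 - ρ * x) ≤ (x - ρ) * (4 + γ ^ 2) :=
  calc 4 * γ * (1 - ρ * x) = γ * (4 * (1 - ρ * x)) := by ring
    _ ≤ γ * (4 + (x - ρ) ^ 2) := mul_le_mul_of_nonneg_left (four_mul_one_sub_mul_le ρ x) hγ
    _ ≤ (x - ρ) * (4 + γ ^ 2) := mul_four_add_sq_le hγ hγd hd

theorem stmt_0_general (γ : ℝ) (hγ0 : 0 < γ) :
    (∀ ρ x : ℝ, -1 < ρ → ρ < 1 → ρ + γ ≤ x → x ≤ 1 →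
      Real.sqrt (1 - ρ ^ 2) * Real.sqrt (1 - x ^ 2) / (1 - ρ * x)
        ≤ (4 - γ ^ 2) / (4 + γ ^ 2)) ∧
    (4 - γ ^ 2) / (4 + γ ^ 2) < 1 := by
  have h4 : (0 : ℝ) < 4 + γ ^ 2 := by positivity
  refine ⟨fun ρ x hρ1 hρ2 hγx hx1 => ?_, by rw [div_lt_one h4]; nlinarith⟩
  have hd : x - ρ ≤ 2 := by linarith
  have hρx : 0 < 1 - ρ * x := by nlinarith
  apply sqrt_one_sub_sq_mul_sqrt_div_le (s := 4 * γ / (4 + γ ^ 2)) (by nlinarith) hρx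
  · exact div_nonneg (by nlinarith) h4.le
  · positivity
  · field_simp
    ring
  · rw [div_mul_eq_mul_div, div_le_iff₀ h4]
    exact four_mul_one_sub_mul_le_mul hγ0.le (by linarith) hd

/-- For `0 < γ ≤ 2`, for every `ρ ∈ (-1,1)` and every `x` with
`ρ + γ ≤ x ≤ 1`, one has `√(1-ρ²)·√(1-x²)/(1-ρx) ≤ (4-γ²)/(4+γ²)`, and
`(4-γ²)/(4+γ²) < 1`. -/
theorem stmt_0 (γ : ℝ) (hγ0 : 0 < γ) (hγ2 : γ ≤ 2) :
    (∀ ρ x : ℝ, -1 < ρ → ρ < 1 → ρ + γ ≤ x → x ≤ 1 →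
      Real.sqrt (1 - ρ ^ 2) * Real.sqrt (1 - x ^ 2) / (1 - ρ * x)
        ≤ (4 - γ ^ 2) / (4 + γ ^ 2)) ∧
    (4 - γ ^ 2) / (4 + γ ^ 2) < 1 :=
  stmt_0_general γ hγ0
end

section
/- Let 0 < γ ≤ 2, let ρ ∈ (−1,1) with ρ + γ ≤ 1, and let n ≥ 3 be an integer; set ñ = n − 3. Then ∫_{ρ+γ}^{1} (1−ρ²)^{n/2} (1−x²)^{(n−3)/2} (1−ρx)^{−n+1/2} dx ≤ (1−ρ²)^{3/2}/(1−|ρ|)^{5/2} · 2 · ((4−γ²)/(4+γ²))^{ñ}. -/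
set_option autoImplicit false

/-!
Since `(1 - ρx)² - (1 - ρ²)(1 - x²) = (x - ρ)²`, the integrand factors as
`(1 - ρ²)^{3/2} (1 - ρx)^{-5/2} R(x)^{(n-3)/2}` with `R(x) = (1 - ρ²)(1 - x²)/(1 - ρx)² = 1 - u²`,
`u = (x - ρ)/(1 - ρx)`. For `x ≥ ρ + γ` one has `u ≥ 4γ/(4 + γ²)` (at `x = ρ + γ` this is
`(γ + 2ρ)² ≥ 0`, and the defect is increasing in `x`), so `R(x) ≤ ((4 - γ²)/(4 + γ²))²`; together with
`1 - ρx ≥ 1 - |ρ|` this bounds the integrand by a constant on an interval of length at most `2`.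
-/

theorem rpow_half_mul_rpow_mul_rpow_eq {a b c : ℝ} (ha : 0 < a) (hb : 0 ≤ b) (hc : 0 < c)
    (s : ℝ) :
    a ^ (s / 2) * b ^ ((s - 3) / 2) * c ^ (-s + 1 / 2)
      = a ^ ((3 : ℝ) / 2) / c ^ ((5 : ℝ) / 2) * (a * b / c ^ 2) ^ ((s - 3) / 2) := by
  have hc2 : (c ^ 2) ^ ((s - 3) / 2) = c ^ (s - 3) := by
    rw [← Real.rpow_natCast, ← Real.rpow_mul hc.le]; ring_nf
  rw [Real.div_rpow (mul_nonneg ha.le hb) (sq_nonneg c), Real.mul_rpow ha.le hb, hc2,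
    show s / 2 = 3 / 2 + (s - 3) / 2 by ring, Real.rpow_add ha,
    show -s + 1 / 2 = -(5 / 2 + (s - 3)) by ring, Real.rpow_neg hc.le, Real.rpow_add hc]
  field_simp

theorem four_mul_mul_one_sub_mul_le {ρ γ x : ℝ} (hρ : ρ ^ 2 ≤ 1) (hγ : 0 ≤ γ) (hx : ρ + γ ≤ x) :
    4 * γ * (1 - ρ * x) ≤ (x - ρ) * (4 + γ ^ 2) := by
  have hslope : 0 ≤ 4 + γ ^ 2 + 4 * γ * ρ := by nlinarith [sq_nonneg (γ + 2 * ρ)]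
  have key : (x - ρ) * (4 + γ ^ 2) - 4 * γ * (1 - ρ * x)
      = (x - (ρ + γ)) * (4 + γ ^ 2 + 4 * γ * ρ) + γ * (γ + 2 * ρ) ^ 2 := by ring
  linarith [mul_nonneg (sub_nonneg.2 hx) hslope, mul_nonneg hγ (sq_nonneg (γ + 2 * ρ))]

theorem one_sub_abs_le_one_sub_mul {ρ x : ℝ} (hx : |x| ≤ 1) : 1 - |ρ| ≤ 1 - ρ * x := by
  have : ρ * x ≤ |ρ| := calc
    ρ * x ≤ |ρ * x| := le_abs_self _
    _ = |ρ| * |x| := abs_mul ρ x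
    _ ≤ |ρ| := mul_le_of_le_one_right (abs_nonneg ρ) hx
  linarith

theorem one_sub_sq_mul_one_sub_sq_le {ρ γ x : ℝ} (hρ : ρ ^ 2 ≤ 1) (hγ : 0 ≤ γ)
    (hx : ρ + γ ≤ x) (hρx : 0 ≤ 1 - ρ * x) :
    (1 - ρ ^ 2) * (1 - x ^ 2) ≤ ((4 - γ ^ 2) / (4 + γ ^ 2)) ^ 2 * (1 - ρ * x) ^ 2 := by
  have hsq : (4 * γ * (1 - ρ * x)) ^ 2 ≤ ((x - ρ) * (4 + γ ^ 2)) ^ 2 :=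
    pow_le_pow_left₀ (by positivity) (four_mul_mul_one_sub_mul_le hρ hγ hx) 2
  rw [div_pow, div_mul_eq_mul_div, le_div_iff₀ (by positivity)]
  linear_combination hsq

-- The integrand of `M₀` with the sample size `n` replaced by a real exponent `s`.
noncomputable def corrTailIntegrand (ρ s x : ℝ) : ℝ :=
  (1 - ρ ^ 2) ^ (s / 2) * (1 - x ^ 2) ^ ((s - 3) / 2) * (1 - ρ * x) ^ (-s + 1 / 2)

theorem corrTailIntegrand_nonneg {ρ x : ℝ} (s : ℝ) (hρ : |ρ| < 1) (hx : |x| ≤ 1) :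
    0 ≤ corrTailIntegrand ρ s x := by
  have hρx : 0 < 1 - ρ * x := by linarith [one_sub_abs_le_one_sub_mul (ρ := ρ) hx]
  have : 0 ≤ 1 - ρ ^ 2 := by nlinarith [sq_abs ρ, abs_nonneg ρ]
  have : 0 ≤ 1 - x ^ 2 := by nlinarith [sq_abs x, abs_nonneg x]
  unfold corrTailIntegrand
  positivity

theorem corrTailIntegrand_le {ρ γ s x : ℝ} (hρ : |ρ| < 1) (hγ0 : 0 ≤ γ) (hγ2 : γ ≤ 2)
    (hs : 3 ≤ s) (hx : x ∈ Set.Icc (ρ + γ) 1) :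
    corrTailIntegrand ρ s x
      ≤ (1 - ρ ^ 2) ^ ((3 : ℝ) / 2) / (1 - |ρ|) ^ ((5 : ℝ) / 2)
          * ((4 - γ ^ 2) / (4 + γ ^ 2)) ^ (s - 3) := by
  obtain ⟨hx1, hx2⟩ := hx
  obtain ⟨hρ1, hρ2⟩ := abs_lt.1 hρ
  have hxabs : |x| ≤ 1 := abs_le.2 ⟨by linarith, hx2⟩
  have hρ1x : 1 - |ρ| ≤ 1 - ρ * x := one_sub_abs_le_one_sub_mul hxabs
  have hρx : 0 < 1 - ρ * x := by linarith
  have hρsq : 0 < 1 - ρ ^ 2 := by nlinarith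
  have hxsq : 0 ≤ 1 - x ^ 2 := by nlinarith
  have hq : 0 ≤ (4 - γ ^ 2) / (4 + γ ^ 2) := div_nonneg (by nlinarith) (by positivity)
  have hratio : (1 - ρ ^ 2) * (1 - x ^ 2) / (1 - ρ * x) ^ 2 ≤ ((4 - γ ^ 2) / (4 + γ ^ 2)) ^ 2 :=
    (div_le_iff₀ (by positivity)).2
      (one_sub_sq_mul_one_sub_sq_le (by nlinarith) hγ0 hx1 hρx.le)
  have hpow : ((1 - ρ ^ 2) * (1 - x ^ 2) / (1 - ρ * x) ^ 2) ^ ((s - 3) / 2)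
      ≤ ((4 - γ ^ 2) / (4 + γ ^ 2)) ^ (s - 3) := by
    calc _ ≤ (((4 - γ ^ 2) / (4 + γ ^ 2)) ^ 2) ^ ((s - 3) / 2) :=
          Real.rpow_le_rpow (by positivity) hratio (by linarith)
      _ = _ := by rw [← Real.rpow_natCast, ← Real.rpow_mul hq]; ring_nf
  rw [corrTailIntegrand, rpow_half_mul_rpow_mul_rpow_eq hρsq hxsq hρx]
  gcongr

/-- For `0 < γ ≤ 2`, `ρ ∈ (-1,1)` with `ρ + γ ≤ 1`, and an
integer `n ≥ 3` (with `ñ = n - 3`),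
`∫_{ρ+γ}^{1} (1-ρ²)^{n/2} (1-x²)^{(n-3)/2} (1-ρx)^{-n+1/2} dx
  ≤ (1-ρ²)^{3/2}/(1-|ρ|)^{5/2} · 2 · ((4-γ²)/(4+γ²))^{ñ}`. -/
theorem stmt_3 (γ ρ : ℝ) (hγ0 : 0 < γ) (hγ2 : γ ≤ 2)
    (hρ1 : -1 < ρ) (hρ2 : ρ < 1) (hsum : ρ + γ ≤ 1) (n : ℕ) (hn : 3 ≤ n) :
    ∫ x in (ρ + γ)..1,
        (1 - ρ ^ 2) ^ ((n : ℝ) / 2) * (1 - x ^ 2) ^ (((n : ℝ) - 3) / 2)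
          * (1 - ρ * x) ^ (-(n : ℝ) + 1 / 2)
      ≤ (1 - ρ ^ 2) ^ ((3 : ℝ) / 2) / (1 - |ρ|) ^ ((5 : ℝ) / 2) * 2
          * ((4 - γ ^ 2) / (4 + γ ^ 2)) ^ (n - 3) := by
  have hρ : |ρ| < 1 := abs_lt.2 ⟨hρ1, hρ2⟩
  set C := (1 - ρ ^ 2) ^ ((3 : ℝ) / 2) / (1 - |ρ|) ^ ((5 : ℝ) / 2)
    * ((4 - γ ^ 2) / (4 + γ ^ 2)) ^ ((n : ℝ) - 3)
  have hbound : ∀ x ∈ Set.uIoc (ρ + γ) 1, ‖corrTailIntegrand ρ n x‖ ≤ C := by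
    intro x hx
    rw [Set.uIoc_of_le hsum] at hx
    have hxabs : |x| ≤ 1 := abs_le.2 ⟨by linarith [hx.1], hx.2⟩
    rw [Real.norm_of_nonneg (corrTailIntegrand_nonneg _ hρ hxabs)]
    exact corrTailIntegrand_le hρ hγ0.le hγ2 (by exact_mod_cast hn) (Set.Ioc_subset_Icc_self hx)
  have hC : 0 ≤ C := by
    have : 0 < 1 - |ρ| := by linarith
    have : 0 < 1 - ρ ^ 2 := by nlinarith
    have : 0 ≤ (4 - γ ^ 2) / (4 + γ ^ 2) := div_nonneg (by nlinarith) (by positivity)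
    positivity
  calc _ ≤ ‖∫ x in (ρ + γ)..1, corrTailIntegrand ρ n x‖ := le_abs_self _
    _ ≤ C * |1 - (ρ + γ)| := intervalIntegral.norm_integral_le_of_norm_le_const hbound
    _ ≤ C * 2 := by gcongr; rw [abs_le]; constructor <;> linarith
    _ = _ := by
      rw [← Real.rpow_natCast ((4 - γ ^ 2) / (4 + γ ^ 2)) (n - 3), Nat.cast_sub hn, Nat.cast_ofNat]
      ring
end

section
/- The function x ↦ Γ(x)/Γ(x + ½) is antitone (nonincreasing) on [1, ∞); in particular, for every real x ≥ 1, Γ(x)/Γ(x + ½) ≤ Γ(1)/Γ(3/2) = 2/√π. -/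
set_option autoImplicit false

open Real in
lemma key_ineq {x y : ℝ} (hx : 0 < x) (hxy : x ≤ y) :
    Real.Gamma y * Real.Gamma (x + 1/2) ≤ Real.Gamma x * Real.Gamma (y + 1/2) := by
  rcases eq_or_lt_of_le hxy with rfl | hlt
  · ring_nf; exact le_rfl
  have hy : 0 < y := hx.trans hlt
  have hd : (0:ℝ) < y + 1/2 - x := by linarith
  have hc : ConvexOn ℝ (Set.Ioi 0) (Real.log ∘ Real.Gamma) := Real.convexOn_log_Gamma
  set f : ℝ → ℝ := Real.log ∘ Real.Gamma with hf
  have hxm : x ∈ Set.Ioi (0:ℝ) := hx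
  have hym : y + 1/2 ∈ Set.Ioi (0:ℝ) := by simp; linarith
  obtain ⟨t, ht⟩ : ∃ t : ℝ, t = (y - x) / (y + 1/2 - x) := ⟨_, rfl⟩
  obtain ⟨s, hs⟩ : ∃ s : ℝ, s = (1/2) / (y + 1/2 - x) := ⟨_, rfl⟩
  have ht0 : 0 ≤ t := by rw [ht]; exact div_nonneg (by linarith) hd.le
  have hs0 : 0 ≤ s := by rw [hs]; positivity
  have htd : t * (y + 1/2 - x) = y - x := by rw [ht, div_mul_cancel₀ _ hd.ne']
  have hsd : s * (y + 1/2 - x) = 1/2 := by rw [hs, div_mul_cancel₀ _ hd.ne']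
  have hts : t + s = 1 := by
    have h : (t + s) * (y + 1/2 - x) = 1 * (y + 1/2 - x) := by linear_combination htd + hsd
    exact mul_right_cancel₀ hd.ne' h
  have h1t : 0 ≤ 1 - t := by linarith
  have h1s : 0 ≤ 1 - s := by linarith
  have e1 : (1 - t) • x + t • (y + 1/2) = y := by
    simp only [smul_eq_mul]; linear_combination htd
  have e2 : (1 - s) • x + s • (y + 1/2) = x + 1/2 := by
    simp only [smul_eq_mul]; linear_combination hsd
  have H1 := hc.2 hxm hym h1t ht0 (by linarith)
  have H2 := hc.2 hxm hym h1s hs0 (by linarith)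
  rw [e1] at H1
  rw [e2] at H2
  have hs1 : s = 1 - t := by linarith
  rw [hs1] at H2
  have hlog : f y + f (x + 1/2) ≤ f x + f (y + 1/2) := by
    have hsum := add_le_add H1 H2
    simp only [smul_eq_mul] at hsum
    have hkey : (1 - t) * f x + t * f (y + 1/2) + ((1 - (1 - t)) * f x + (1 - t) * f (y + 1/2))
        = f x + f (y + 1/2) := by ring
    linarith
  have hGy := Real.Gamma_pos_of_pos hy
  have hGx := Real.Gamma_pos_of_pos hx
  have hGxh := Real.Gamma_pos_of_pos (by linarith : (0:ℝ) < x + 1/2)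
  have hGyh := Real.Gamma_pos_of_pos (by linarith : (0:ℝ) < y + 1/2)
  have : Real.log (Real.Gamma y * Real.Gamma (x + 1/2)) ≤
      Real.log (Real.Gamma x * Real.Gamma (y + 1/2)) := by
    rw [Real.log_mul hGy.ne' hGxh.ne', Real.log_mul hGx.ne' hGyh.ne']
    exact hlog
  exact (Real.log_le_log_iff (by positivity) (by positivity)).mp this

/-- `x ↦ Γ(x)/Γ(x+½)` is antitone on `[1, ∞)`; in particular,
for every `x ≥ 1`, `Γ(x)/Γ(x+½) ≤ Γ(1)/Γ(3/2) = 2/√π`. -/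
theorem stmt_9 :
    AntitoneOn (fun x : ℝ => Real.Gamma x / Real.Gamma (x + 1 / 2)) (Set.Ici 1) ∧
    (∀ x : ℝ, 1 ≤ x → Real.Gamma x / Real.Gamma (x + 1 / 2) ≤ 2 / Real.sqrt Real.pi) ∧
    Real.Gamma 1 / Real.Gamma (3 / 2) = 2 / Real.sqrt Real.pi := by
  have hanti : AntitoneOn (fun x : ℝ => Real.Gamma x / Real.Gamma (x + 1 / 2)) (Set.Ici 1) := by
    intro x hx y hy hxy
    have hx0 : (0:ℝ) < x := lt_of_lt_of_le one_pos hx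
    have hGxh := Real.Gamma_pos_of_pos (by linarith : (0:ℝ) < x + 1/2)
    have hGyh := Real.Gamma_pos_of_pos (by linarith : (0:ℝ) < y + 1/2)
    simp only
    rw [div_le_div_iff₀ hGyh hGxh]
    exact key_ineq hx0 hxy
  have heq : Real.Gamma 1 / Real.Gamma (3 / 2) = 2 / Real.sqrt Real.pi := by
    have h32 : Real.Gamma (3/2) = Real.sqrt Real.pi / 2 := by
      have : (3/2 : ℝ) = 1/2 + 1 := by norm_num
      rw [this, Real.Gamma_add_one (by norm_num), Real.Gamma_one_half_eq]
      ring
    rw [Real.Gamma_one, h32, one_div_div]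
  refine ⟨hanti, fun x hx => ?_, heq⟩
  have := hanti (Set.mem_Ici.mpr le_rfl) (Set.mem_Ici.mpr hx) hx
  simp only at this
  calc Real.Gamma x / Real.Gamma (x + 1/2) ≤ Real.Gamma 1 / Real.Gamma (1 + 1/2) := this
    _ = 2 / Real.sqrt Real.pi := by norm_num at heq ⊢; linarith [heq]
end
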